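/- arXiv:1803.00849 — 6 statements merged into one kernel-verified Lean document; each statement's English description precedes it below -/
import Mathlib

section
/- For any integer m ≥ 3, the volume of the union of the anchored boxes box(p) = [0,p₁]×[0,p₂]×[0,p₃] over all p in P_m = {(x,y,z) ∈ ℤ³_{>0} : x+y+z = m} equals m(m-1)(m-2)/6. -/
open MeasureTheory Finset
open scoped ENNReal

/-- The set of positive integer lattice points on the plane `x+y+z=m`, as points of `ℝ³`. -/
def Pm (m : ℕ) : Set (Fin 3 → ℝ) :=
  {p | ∃ x y z : ℕ, 0 < x ∧ 0 < y ∧ 0 < z ∧ x + y + z = m ∧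
    p = ![(x : ℝ), (y : ℝ), (z : ℝ)]}


private def S3 (n : ℕ) : Finset (ℕ × ℕ × ℕ) :=
  (Finset.range (n+1) ×ˢ Finset.range (n+1) ×ˢ Finset.range (n+1)).filter
    (fun t => t.1 + t.2.1 + t.2.2 ≤ n)

private lemma mem_S3 {n : ℕ} {t : ℕ × ℕ × ℕ} :
    t ∈ S3 n ↔ t.1 + t.2.1 + t.2.2 ≤ n := by
  simp only [S3, Finset.mem_filter, Finset.mem_product, Finset.mem_range]
  omega

private lemma count2 (t : ℕ) :
    ((Finset.range (t+1) ×ˢ Finset.range (t+1)).filter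
      (fun q : ℕ × ℕ => q.1 + q.2 ≤ t)).card * 2 = (t+1) * (t+2) := by
  rw [Finset.card_filter, Finset.sum_product]
  have h1 : ∀ j ∈ Finset.range (t+1),
      (∑ k ∈ Finset.range (t+1), if j + k ≤ t then 1 else 0) = t + 1 - j := by
    intro j hj
    rw [← Finset.card_filter]
    have : Finset.filter (fun k => j + k ≤ t) (Finset.range (t+1))
        = Finset.range (t+1-j) := by
      ext k; simp only [Finset.mem_filter, Finset.mem_range]; omega
    rw [this, Finset.card_range]
  rw [Finset.sum_congr rfl h1]
  have h2 : (∑ j ∈ Finset.range (t+1), (t + 1 - j))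
      = ∑ j ∈ Finset.range (t+1), (j + 1) := by
    rw [← Finset.sum_range_reflect (fun j => j + 1) (t+1)]
    apply Finset.sum_congr rfl
    intro j hj; simp only [Finset.mem_range] at hj; omega
  rw [h2]
  have h3 : (∑ j ∈ Finset.range (t+1), (j + 1)) = ∑ j ∈ Finset.range (t+2), j := by
    rw [Finset.sum_range_succ' (fun j => j) (t+1)]; simp
  rw [h3, Finset.sum_range_id_mul_two]
  simp [Nat.add_sub_cancel]
  ring

private lemma sum3 (N : ℕ) :
    ∑ i ∈ Finset.range N, (i+1)*(i+2)*3 = N*(N+1)*(N+2) := by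
  induction N with
  | zero => simp
  | succ k ih => rw [Finset.sum_range_succ, ih]; ring

private lemma card_S3 (n : ℕ) : (S3 n).card * 6 = (n+1) * (n+2) * (n+3) := by
  rw [S3, Finset.card_filter, Finset.sum_product]
  have key : ∀ i ∈ Finset.range (n+1),
      (∑ p ∈ Finset.range (n+1) ×ˢ Finset.range (n+1),
        if i + p.1 + p.2 ≤ n then 1 else 0) * 2 = (n-i+1) * (n-i+2) := by
    intro i hi
    simp only [Finset.mem_range] at hi
    rw [← Finset.card_filter]
    have : Finset.filter (fun p : ℕ × ℕ => i + p.1 + p.2 ≤ n)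
          (Finset.range (n+1) ×ˢ Finset.range (n+1))
        = Finset.filter (fun p : ℕ × ℕ => p.1 + p.2 ≤ n - i)
          (Finset.range (n-i+1) ×ˢ Finset.range (n-i+1)) := by
      ext p
      simp only [Finset.mem_filter, Finset.mem_product, Finset.mem_range]
      omega
    rw [this, count2 (n-i)]
  have : (∑ i ∈ Finset.range (n+1), ∑ p ∈ Finset.range (n+1) ×ˢ Finset.range (n+1),
        if i + p.1 + p.2 ≤ n then 1 else 0) * 6
      = ∑ i ∈ Finset.range (n+1), (n-i+1) * (n-i+2) * 3 := by
    rw [Finset.sum_mul]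
    apply Finset.sum_congr rfl
    intro i hi
    have := key i hi
    omega
  rw [this]
  calc ∑ i ∈ Finset.range (n+1), (n-i+1)*(n-i+2)*3
      = ∑ i ∈ Finset.range (n+1), (fun i => (i+1)*(i+2)*3) (n+1-1-i) := by
        apply Finset.sum_congr rfl
        intro i hi
        simp only [Finset.mem_range] at hi
        have h : n + 1 - 1 - i = n - i := by omega
        simp only [h]
    _ = ∑ i ∈ Finset.range (n+1), (i+1)*(i+2)*3 :=
        Finset.sum_range_reflect (fun i => (i+1)*(i+2)*3) (n+1)
    _ = (n+1)*(n+2)*(n+3) := sum3 (n+1)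


private def lo (t : ℕ × ℕ × ℕ) : Fin 3 → ℝ := ![t.1, t.2.1, t.2.2]

private def cubeIoc (t : ℕ × ℕ × ℕ) : Set (Fin 3 → ℝ) :=
  Set.pi Set.univ fun l => Set.Ioc (lo t l) (lo t l + 1)

private lemma vol_cubeIoc (t : ℕ × ℕ × ℕ) : volume (cubeIoc t) = 1 := by
  rw [cubeIoc, volume_pi_pi]
  simp [Real.volume_Ioc]

private lemma vol_cubeIcc (t : ℕ × ℕ × ℕ) :
    volume (Set.Icc (lo t) (fun l => lo t l + 1)) = 1 := by
  rw [Real.volume_Icc_pi]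
  simp

private lemma lo_inj : Function.Injective lo := by
  intro s t h
  have h0 := congrFun h 0
  have h1 := congrFun h 1
  have h2 := congrFun h 2
  simp only [lo, Matrix.cons_val_zero, Matrix.cons_val_one, Matrix.head_cons,
    Matrix.cons_val_two, Matrix.tail_cons, Nat.cast_inj] at h0 h1 h2
  exact Prod.ext h0 (Prod.ext h1 h2)

private lemma cubeIoc_disjoint {s t : ℕ × ℕ × ℕ} (h : s ≠ t) :
    Disjoint (cubeIoc s) (cubeIoc t) := by
  rw [Set.disjoint_left]
  intro q hs ht
  have hne : lo s ≠ lo t := fun he => h (lo_inj he)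
  obtain ⟨l, hl⟩ := Function.ne_iff.mp hne
  have hs' := hs l (Set.mem_univ l)
  have ht' := ht l (Set.mem_univ l)
  simp only [Set.mem_Ioc] at hs' ht'
  -- lo s l and lo t l are distinct nonneg integers (casts of naturals)
  have : ∀ u : ℕ × ℕ × ℕ, ∃ k : ℕ, lo u l = k := by
    intro u
    fin_cases l
    · exact ⟨u.1, rfl⟩
    · exact ⟨u.2.1, rfl⟩
    · exact ⟨u.2.2, rfl⟩
  obtain ⟨a, ha⟩ := this s
  obtain ⟨b, hb⟩ := this t
  rw [ha] at hl
  rw [hb] at hl ht'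
  have hab : a ≠ b := by exact_mod_cast hl
  rcases lt_or_gt_of_ne hab with hlt | hlt
  · have : (a : ℝ) + 1 ≤ b := by exact_mod_cast hlt
    linarith [hs'.2, ht'.1]
  · have : (b : ℝ) + 1 ≤ a := by exact_mod_cast hlt
    linarith [hs'.1, ht'.2]

private lemma coord (a : ℝ) (x : ℕ) (hx : 0 < x) (h0 : 0 ≤ a) (h1 : a ≤ x) :
    ((min ⌊a⌋₊ (x-1) : ℕ) : ℝ) ≤ a ∧ a ≤ (min ⌊a⌋₊ (x-1) : ℕ) + 1 := by
  constructor
  · calc ((min ⌊a⌋₊ (x-1) : ℕ) : ℝ) ≤ (⌊a⌋₊ : ℝ) := by exact_mod_cast Nat.min_le_left _ _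
      _ ≤ a := Nat.floor_le h0
  · rcases le_or_gt ⌊a⌋₊ (x-1) with h | h
    · rw [min_eq_left h]
      exact (Nat.lt_floor_add_one a).le
    · rw [min_eq_right h.le]
      have : ((x - 1 : ℕ) : ℝ) + 1 = (x : ℝ) := by
        have : (1:ℕ) ≤ x := hx
        push_cast [Nat.cast_sub this]
        ring_nf
      rw [this]; exact h1

private lemma lower_incl (m : ℕ) (hm : 3 ≤ m) (t : ℕ × ℕ × ℕ) (ht : t ∈ S3 (m-3)) :
    cubeIoc t ⊆ ⋃ p ∈ Pm m, Set.Icc (0 : Fin 3 → ℝ) p := by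
  have ht' := mem_S3.mp ht
  intro q hq
  set x := t.1 + 1
  set y := t.2.1 + 1
  set z := m - 2 - t.1 - t.2.1
  have hz : t.2.2 + 1 ≤ z := by omega
  refine Set.mem_biUnion (show (![(x:ℝ), y, z] : Fin 3 → ℝ) ∈ Pm m from
    ⟨x, y, z, by omega, by omega, by omega, by omega, rfl⟩) ?_
  have h0 := hq 0 (Set.mem_univ 0)
  have h1 := hq 1 (Set.mem_univ 1)
  have h2 := hq 2 (Set.mem_univ 2)
  simp only [lo, Set.mem_Ioc, Matrix.cons_val_zero, Matrix.cons_val_one, Matrix.head_cons,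
    Matrix.cons_val_two, Matrix.tail_cons] at h0 h1 h2
  constructor
  · intro l
    fin_cases l
    · exact le_of_lt (lt_of_le_of_lt (Nat.cast_nonneg t.1) h0.1)
    · exact le_of_lt (lt_of_le_of_lt (Nat.cast_nonneg t.2.1) h1.1)
    · exact le_of_lt (lt_of_le_of_lt (Nat.cast_nonneg t.2.2) h2.1)
  · intro l
    fin_cases l
    · simpa [x] using h0.2.trans (by push_cast; norm_num)
    · simpa [y] using h1.2.trans (by push_cast; norm_num)
    · have : (t.2.2 : ℝ) + 1 ≤ (z : ℝ) := by exact_mod_cast hz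
      simpa using h2.2.trans this

private lemma upper_incl (m : ℕ) (hm : 3 ≤ m) :
    (⋃ p ∈ Pm m, Set.Icc (0 : Fin 3 → ℝ) p)
      ⊆ ⋃ t ∈ S3 (m-3), Set.Icc (lo t) (fun l => lo t l + 1) := by
  intro q hq
  obtain ⟨p, hp, hqp⟩ := Set.mem_iUnion₂.mp hq
  obtain ⟨x, y, z, hx, hy, hz, hsum, rfl⟩ := hp
  obtain ⟨hq0, hq1⟩ := hqp
  have h0l := hq0 0; have h1l := hq0 1; have h2l := hq0 2
  have h0u := hq1 0; have h1u := hq1 1; have h2u := hq1 2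
  simp only [Pi.zero_apply, Matrix.cons_val_zero, Matrix.cons_val_one, Matrix.head_cons,
    Matrix.cons_val_two, Matrix.tail_cons] at h0l h1l h2l h0u h1u h2u
  set i := min ⌊q 0⌋₊ (x-1) with hi
  set j := min ⌊q 1⌋₊ (y-1) with hj
  set k := min ⌊q 2⌋₊ (z-1) with hk
  have c0 := coord (q 0) x hx h0l h0u
  have c1 := coord (q 1) y hy h1l h1u
  have c2 := coord (q 2) z hz h2l h2u
  have hmem : (i, j, k) ∈ S3 (m-3) := by
    rw [mem_S3]
    have hix : i ≤ x - 1 := Nat.min_le_right _ _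
    have hjy : j ≤ y - 1 := Nat.min_le_right _ _
    have hkz : k ≤ z - 1 := Nat.min_le_right _ _
    show i + j + k ≤ m - 3
    omega
  refine Set.mem_biUnion hmem ?_
  constructor
  · intro l
    fin_cases l
    · exact c0.1
    · exact c1.1
    · exact c2.1
  · intro l
    fin_cases l
    · exact c0.2
    · exact c1.2
    · exact c2.2


/-- For `m ≥ 3`, the volume of the union of the anchored boxes `box(p)` over `p ∈ P_m`
equals `m(m-1)(m-2)/6`. -/
theorem stmt1 (m : ℕ) (hm : 3 ≤ m) :
    volume (⋃ p ∈ Pm m, Set.Icc (0 : Fin 3 → ℝ) p)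
      = ((m * (m - 1) * (m - 2) / 6 : ℕ) : ℝ≥0∞) := by
  have hcard : m * (m - 1) * (m - 2) / 6 = (S3 (m-3)).card := by
    have h6 : (S3 (m-3)).card * 6 = (m-3+1) * (m-3+2) * (m-3+3) := card_S3 (m-3)
    have heq : m * (m - 1) * (m - 2) = (S3 (m-3)).card * 6 := by
      rw [h6]
      have h1 : m - 3 + 1 = m - 2 := by omega
      have h2 : m - 3 + 2 = m - 1 := by omega
      have h3 : m - 3 + 3 = m := by omega
      rw [h1, h2, h3]; ring
    omega
  rw [hcard]
  apply le_antisymm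
  · calc volume (⋃ p ∈ Pm m, Set.Icc (0 : Fin 3 → ℝ) p)
        ≤ volume (⋃ t ∈ S3 (m-3), Set.Icc (lo t) (fun l => lo t l + 1)) :=
          measure_mono (upper_incl m hm)
      _ ≤ ∑ t ∈ S3 (m-3), volume (Set.Icc (lo t) (fun l => lo t l + 1)) :=
          measure_biUnion_finset_le _ _
      _ = ((S3 (m-3)).card : ℝ≥0∞) := by
          rw [Finset.sum_congr rfl (fun t _ => vol_cubeIcc t)]
          simp
  · have hdisj : ((S3 (m-3) : Finset (ℕ × ℕ × ℕ)) : Set (ℕ × ℕ × ℕ)).PairwiseDisjoint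
        cubeIoc := fun s _ t _ hst => cubeIoc_disjoint hst
    have hmeas : ∀ t ∈ S3 (m-3), MeasurableSet (cubeIoc t) := fun t _ =>
      MeasurableSet.univ_pi fun l => measurableSet_Ioc
    calc ((S3 (m-3)).card : ℝ≥0∞)
        = ∑ t ∈ S3 (m-3), volume (cubeIoc t) := by
          rw [Finset.sum_congr rfl (fun t _ => vol_cubeIoc t)]
          simp
      _ = volume (⋃ t ∈ S3 (m-3), cubeIoc t) :=
          (measure_biUnion_finset hdisj hmeas).symm
      _ ≤ volume (⋃ p ∈ Pm m, Set.Icc (0 : Fin 3 → ℝ) p) := by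
          apply measure_mono
          exact Set.iUnion₂_subset fun t ht => lower_incl m hm t ht
end

section
/- Rounding lemma: let P ⊆ ℝ^d_{>0} be finite, 0 < ε ≤ 1/2, and let P̃ be obtained from P by rounding every coordinate of every point down to the largest power of (1−ε)^{1/d} not exceeding it. Then for every k, (1−ε)·VolSel(P,k) ≤ VolSel(P̃,k) ≤ VolSel(P,k). -/
open MeasureTheory
open scoped ENNReal Pointwise

/-- Volume of union of anchored boxes of a finite point set. -/
noncomputable def μU {d : ℕ} (S : Finset (Fin d → ℝ)) : ℝ≥0∞ :=
  volume (⋃ p ∈ S, Set.Icc (0 : Fin d → ℝ) p)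

/-- `VolSel P k`: maximal volume of union of anchored boxes over subsets of `P` of size `≤ k`. -/
noncomputable def VolSel {d : ℕ} (P : Finset (Fin d → ℝ)) (k : ℕ) : ℝ≥0∞ :=
  (P.powerset.filter fun S => S.card ≤ k).sup μU

/-- The largest power `β^j` (with `j ∈ ℤ`) of a base `β ∈ (0,1)` not exceeding `x > 0`. -/
noncomputable def roundDown (β x : ℝ) : ℝ := β ^ (⌈Real.log x / Real.log β⌉ : ℤ)

lemma roundDown_rpow {β x : ℝ} (hβ0 : 0 < β) :
    roundDown β x = β ^ ((⌈Real.log x / Real.log β⌉ : ℤ) : ℝ) := by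
  rw [roundDown, Real.rpow_intCast]

lemma rpow_div_log {β x : ℝ} (hβ0 : 0 < β) (hβ1 : β ≠ 1) (hx : 0 < x) :
    β ^ (Real.log x / Real.log β) = x := by
  have hlogβ : Real.log β ≠ 0 := Real.log_ne_zero_of_pos_of_ne_one hβ0 hβ1
  rw [Real.rpow_def_of_pos hβ0]
  rw [mul_div_cancel₀ _ hlogβ, Real.exp_log hx]

lemma roundDown_le {β x : ℝ} (hβ0 : 0 < β) (hβ1 : β < 1) (hx : 0 < x) :
    roundDown β x ≤ x := by
  set t := Real.log x / Real.log β
  calc roundDown β x = β ^ ((⌈t⌉ : ℤ) : ℝ) := roundDown_rpow hβ0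
    _ ≤ β ^ t := Real.rpow_le_rpow_of_exponent_ge hβ0 hβ1.le (Int.le_ceil t)
    _ = x := rpow_div_log hβ0 hβ1.ne hx

lemma mul_le_roundDown {β x : ℝ} (hβ0 : 0 < β) (hβ1 : β < 1) (hx : 0 < x) :
    β * x ≤ roundDown β x := by
  set t := Real.log x / Real.log β
  have h1 : ((⌈t⌉ : ℤ) : ℝ) < t + 1 := by
    exact_mod_cast Int.ceil_lt_add_one t
  calc β * x = β ^ (t + 1) := by
        rw [Real.rpow_add hβ0, Real.rpow_one, rpow_div_log hβ0 hβ1.ne hx, mul_comm]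
    _ ≤ β ^ ((⌈t⌉ : ℤ) : ℝ) :=
        (Real.rpow_lt_rpow_of_exponent_gt hβ0 hβ1 h1).le
    _ = roundDown β x := (roundDown_rpow hβ0).symm

lemma smul_Icc_zero {d : ℕ} {β : ℝ} (hβ0 : 0 < β) (p : Fin d → ℝ) :
    β • Set.Icc (0 : Fin d → ℝ) p = Set.Icc 0 (β • p) := by
  ext x
  constructor
  · rintro ⟨y, ⟨hy0, hy1⟩, rfl⟩
    refine ⟨fun i => ?_, fun i => ?_⟩
    · simpa using mul_nonneg hβ0.le (hy0 i)
    · simpa using mul_le_mul_of_nonneg_left (hy1 i) hβ0.le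
  · rintro ⟨h0, h1⟩
    refine ⟨β⁻¹ • x, ⟨fun i => ?_, fun i => ?_⟩, ?_⟩
    · simpa using mul_nonneg (inv_nonneg.2 hβ0.le) (h0 i)
    · have := mul_le_mul_of_nonneg_left (h1 i) (inv_nonneg.2 hβ0.le)
      simpa [inv_mul_cancel_left₀ hβ0.ne'] using this
    · simp [smul_smul, mul_inv_cancel₀ hβ0.ne']

/-- Rounding lemma: rounding every coordinate down to the largest power of `(1-ε)^{1/d}`
changes `VolSel` by a factor of at most `1-ε`. -/
theorem stmt8 {d : ℕ} (hd : 0 < d) (ε : ℝ) (hε : 0 < ε) (hε2 : ε ≤ 1 / 2)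
    (P : Finset (Fin d → ℝ)) (hP : ∀ p ∈ P, ∀ i, 0 < p i) (k : ℕ) :
    ENNReal.ofReal (1 - ε) * VolSel P k
        ≤ VolSel (P.image fun p i => roundDown ((1 - ε) ^ ((1 : ℝ) / d)) (p i)) k ∧
      VolSel (P.image fun p i => roundDown ((1 - ε) ^ ((1 : ℝ) / d)) (p i)) k
        ≤ VolSel P k := by
  classical
  set β : ℝ := (1 - ε) ^ ((1 : ℝ) / d) with hβdef
  set f : (Fin d → ℝ) → (Fin d → ℝ) := fun p i => roundDown β (p i) with hfdef
  have h1ε : 0 < 1 - ε := by linarith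
  have hβ0 : 0 < β := Real.rpow_pos_of_pos h1ε _
  have hβ1 : β < 1 := by
    apply Real.rpow_lt_one h1ε.le (by linarith)
    positivity
  have hβd : β ^ d = 1 - ε := by
    rw [hβdef, ← Real.rpow_natCast ((1 - ε) ^ ((1:ℝ)/d)) d, ← Real.rpow_mul h1ε.le,
      one_div, inv_mul_cancel₀ (by exact_mod_cast hd.ne'), Real.rpow_one]
  -- basic pointwise bounds on `f`
  have hf_le : ∀ p ∈ P, f p ≤ p := fun p hp i => roundDown_le hβ0 hβ1 (hP p hp i)
  have hf_ge : ∀ p ∈ P, β • p ≤ f p := fun p hp i => mul_le_roundDown hβ0 hβ1 (hP p hp i)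
  -- membership of subsets in the filtered powersets
  have hmem : ∀ {Q : Finset (Fin d → ℝ)} {S : Finset (Fin d → ℝ)},
      S ⊆ Q → S.card ≤ k → S ∈ Q.powerset.filter fun S => S.card ≤ k := by
    intro Q S h1 h2
    simp [Finset.mem_filter, Finset.mem_powerset, h1, h2]
  constructor
  · -- lower bound
    have hne : (P.powerset.filter fun S => S.card ≤ k).Nonempty :=
      ⟨∅, hmem (Finset.empty_subset P) (by simp)⟩
    obtain ⟨S, hS, hSsup⟩ := Finset.exists_mem_eq_sup _ hne μU
    simp only [Finset.mem_filter, Finset.mem_powerset] at hS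
    rw [VolSel, hSsup]
    have key : ENNReal.ofReal (1 - ε) * μU S ≤ μU (S.image f) := by
      have hsub : (⋃ p ∈ S, Set.Icc (0 : Fin d → ℝ) (β • p))
          ⊆ ⋃ p ∈ S, Set.Icc (0 : Fin d → ℝ) (f p) := by
        refine Set.iUnion₂_mono fun p hp => ?_
        exact Set.Icc_subset_Icc le_rfl (hf_ge p (hS.1 hp))
      have hscale : ENNReal.ofReal (1 - ε) * μU S
          = volume (⋃ p ∈ S, Set.Icc (0 : Fin d → ℝ) (β • p)) := by
        have : (⋃ p ∈ S, Set.Icc (0 : Fin d → ℝ) (β • p))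
            = β • ⋃ p ∈ S, Set.Icc (0 : Fin d → ℝ) p := by
          rw [Set.smul_set_iUnion₂]
          exact Set.iUnion₂_congr fun p _ => (smul_Icc_zero hβ0 p).symm
        rw [this, Measure.addHaar_smul, μU]
        congr 1
        rw [abs_of_nonneg (by positivity)]
        congr 1
        simp [hβd]
      rw [hscale]
      refine (measure_mono hsub).trans_eq ?_
      rw [μU, Finset.set_biUnion_finset_image]
    refine key.trans (Finset.le_sup ?_)
    exact hmem (Finset.image_subset_image hS.1) ((Finset.card_image_le).trans hS.2)
  · -- upper bound
    rw [VolSel]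
    refine Finset.sup_le fun T hT => ?_
    simp only [Finset.mem_filter, Finset.mem_powerset] at hT
    -- choose a preimage for each point of T
    have hch : ∀ q ∈ T, ∃ p ∈ P, f p = q := by
      intro q hq
      have := hT.1 hq
      simpa [Finset.mem_image] using this
    set g : (Fin d → ℝ) → (Fin d → ℝ) := fun q =>
      if h : ∃ p ∈ P, f p = q then h.choose else q with hgdef
    have hg : ∀ q ∈ T, g q ∈ P ∧ f (g q) = q := by
      intro q hq
      have h := hch q hq
      simp only [hgdef, dif_pos h]
      exact ⟨h.choose_spec.1, h.choose_spec.2⟩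
    have hsub : (⋃ q ∈ T, Set.Icc (0 : Fin d → ℝ) q)
        ⊆ ⋃ p ∈ T.image g, Set.Icc (0 : Fin d → ℝ) p := by
      rw [Finset.set_biUnion_finset_image]
      refine Set.iUnion₂_mono fun q hq => ?_
      obtain ⟨hgP, hgq⟩ := hg q hq
      refine Set.Icc_subset_Icc le_rfl ?_
      calc q = f (g q) := hgq.symm
        _ ≤ g q := hf_le _ hgP
    have : μU T ≤ μU (T.image g) := measure_mono hsub
    refine this.trans (Finset.le_sup ?_)
    refine hmem ?_ ((Finset.card_image_le).trans hT.2)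
    intro x hx
    simp only [Finset.mem_image] at hx
    obtain ⟨q, hq, rfl⟩ := hx
    exact (hg q hq).1
end

section
/- Existence of a good offset: under the setting of the survival bound (for uniform ℓ ∈ [τ]^d, Pr[p ∉ S_ℓ] ≤ d/τ ≤ ε for each p ∈ S), there exists an offset ℓ with μ(S_ℓ) ≥ (1−ε)·μ(S), and hence VolSel(P_ℓ, k) ≥ (1−ε)·VolSel(P,k) for some ℓ, where P_ℓ is the set of surviving points of P. -/
open MeasureTheory
open scoped ENNReal

lemma card_coord_le {d τ : ℕ} (i : Fin d) (b : Fin τ) :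
    (Finset.univ.filter fun ℓ : Fin d → Fin τ => ℓ i = b).card ≤ τ ^ (d - 1) := by
  obtain ⟨m, rfl⟩ := Nat.exists_eq_succ_of_ne_zero i.pos.ne'
  have h := Finset.card_le_card_of_injOn
    (f := fun ℓ : Fin (m+1) → Fin τ => fun j : Fin m => ℓ (i.succAbove j))
    (s := Finset.univ.filter fun ℓ : Fin (m+1) → Fin τ => ℓ i = b)
    (t := (Finset.univ : Finset (Fin m → Fin τ)))
    (fun _ _ => Finset.mem_univ _) ?_
  · simpa using h
  · intro ℓ hℓ ℓ' hℓ' h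
    simp only [Finset.coe_filter, Set.mem_setOf_eq, Finset.mem_univ, true_and] at hℓ hℓ'
    funext j
    rcases eq_or_ne j i with rfl | hj
    · rw [hℓ, hℓ']
    · obtain ⟨k, hk⟩ := Fin.exists_succAbove_eq hj
      rw [← hk]; exact congrFun h k

lemma coord_card {d τ : ℕ} (i : Fin d) (c : ℤ) :
    (Finset.univ.filter fun ℓ : Fin d → Fin τ => c = ((ℓ i : ℕ) : ℤ)).card ≤ τ ^ (d - 1) := by
  by_cases h : ∃ b : Fin τ, c = ((b : ℕ) : ℤ)
  · obtain ⟨b, rfl⟩ := h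
    have he : (Finset.univ.filter fun ℓ : Fin d → Fin τ => ((b : ℕ) : ℤ) = ((ℓ i : ℕ) : ℤ))
        = Finset.univ.filter fun ℓ : Fin d → Fin τ => ℓ i = b := by
      apply Finset.filter_congr
      intro ℓ _
      constructor
      · intro hh; exact (Fin.val_injective (by exact_mod_cast hh.symm))
      · rintro rfl; rfl
    rw [he]; exact card_coord_le i b
  · have : (Finset.univ.filter fun ℓ : Fin d → Fin τ => c = ((ℓ i : ℕ) : ℤ)) = ∅ := by
      apply Finset.filter_false_of_mem
      intro ℓ _ hc
      exact h ⟨ℓ i, hc⟩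
    rw [this]; simp

lemma kill_card {d τ : ℕ} (c : Fin d → ℤ) :
    (Finset.univ.filter fun ℓ : Fin d → Fin τ => ¬ ∀ i, c i ≠ ((ℓ i : ℕ) : ℤ)).card
      ≤ d * τ ^ (d - 1) := by
  have hsub : (Finset.univ.filter fun ℓ : Fin d → Fin τ => ¬ ∀ i, c i ≠ ((ℓ i : ℕ) : ℤ))
      ⊆ Finset.univ.biUnion (fun i : Fin d =>
        Finset.univ.filter fun ℓ : Fin d → Fin τ => c i = ((ℓ i : ℕ) : ℤ)) := by
    intro ℓ hℓ
    simp only [Finset.mem_filter, Finset.mem_univ, true_and, not_forall, not_not] at hℓ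
    obtain ⟨i, hi⟩ := hℓ
    simp only [Finset.mem_biUnion, Finset.mem_filter, Finset.mem_univ, true_and]
    exact ⟨i, hi⟩
  calc _ ≤ _ := Finset.card_le_card hsub
    _ ≤ ∑ i : Fin d, (Finset.univ.filter fun ℓ : Fin d → Fin τ => c i = ((ℓ i : ℕ) : ℤ)).card :=
        Finset.card_biUnion_le
    _ ≤ ∑ _i : Fin d, τ ^ (d - 1) := Finset.sum_le_sum fun i _ => coord_card i (c i)
    _ = d * τ ^ (d - 1) := by simp [Finset.sum_const, mul_comm]

/-- Existence of a good offset: there is an offset `ℓ ∈ [τ]^d` such that, for any optimal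
size-`≤k` subset `S` of `P`, the surviving part `S_ℓ` keeps `(1-ε)` of the volume, and hence
`VolSel(P_ℓ,k) ≥ (1-ε)·VolSel(P,k)`, where survival means `x p i ≢ ℓ i (mod τ)` for all `i`. -/
theorem stmt12 {d : ℕ} (P : Finset (Fin d → ℝ)) (hP : ∀ p ∈ P, ∀ i, 0 < p i)
    (x : (Fin d → ℝ) → Fin d → ℤ) (τ : ℕ) (hτ : 0 < τ) (ε : ℝ) (hε : 0 < ε)
    (hdτ : (d : ℝ) ≤ ε * τ) (k : ℕ) (S : Finset (Fin d → ℝ)) (hSP : S ⊆ P)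
    (hSk : S.card ≤ k) (hSopt : μU S = VolSel P k) :
    ∃ ℓ : Fin d → Fin τ,
      ENNReal.ofReal (1 - ε) * μU S ≤
          μU (S.filter fun p => ∀ i, x p i % (τ : ℤ) ≠ ((ℓ i : ℕ) : ℤ)) ∧
        ENNReal.ofReal (1 - ε) * VolSel P k ≤
          VolSel (P.filter fun p => ∀ i, x p i % (τ : ℤ) ≠ ((ℓ i : ℕ) : ℤ)) k := by
  classical
  haveI : NeZero τ := ⟨hτ.ne'⟩
  set r := (WellOrderingRel : (Fin d → ℝ) → (Fin d → ℝ) → Prop) with hr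
  have hwo : IsWellOrder _ r := WellOrderingRel.isWellOrder
  have hwf : WellFounded r := hwo.wf
  set box : (Fin d → ℝ) → Set (Fin d → ℝ) := fun p => Set.Icc 0 p with hbox
  set O : (Fin d → ℝ) → Set (Fin d → ℝ) :=
    fun p => box p \ ⋃ q ∈ S.filter (fun q => r q p), box q with hO
  have hOmeas : ∀ p, MeasurableSet (O p) := fun p =>
    measurableSet_Icc.diff (MeasurableSet.biUnion (S.filter (fun q => r q p)).countable_toSet
      fun q _ => measurableSet_Icc)
  have hOsub : ∀ p, O p ⊆ box p := fun p => Set.diff_subset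
  -- union of owned regions is the whole union
  have hUnion : ⋃ p ∈ S, O p = ⋃ p ∈ S, box p := by
    apply Set.Subset.antisymm
    · exact Set.iUnion₂_mono fun p _ => hOsub p
    · intro y hy
      simp only [Set.mem_iUnion, exists_prop] at hy ⊢
      obtain ⟨p0, hp0, hyp0⟩ := hy
      have hne : {p | p ∈ S ∧ y ∈ box p}.Nonempty := ⟨p0, hp0, hyp0⟩
      set m := hwf.min _ hne with hm
      have hmm := hwf.min_mem _ hne
      refine ⟨m, hmm.1, hmm.2, ?_⟩
      simp only [Set.mem_iUnion, exists_prop, not_exists, not_and]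
      intro q hq hyq
      simp only [Finset.mem_filter] at hq
      exact hwf.not_lt_min _ (⟨hq.1, hyq⟩ : q ∈ {p | p ∈ S ∧ y ∈ box p}) hq.2
  -- disjointness
  have hdisj : (↑S : Set (Fin d → ℝ)).PairwiseDisjoint O := by
    intro p hp q hq hpq
    have key : ∀ a b : Fin d → ℝ, a ∈ S → r a b → Disjoint (O a) (O b) := by
      intro a b ha hab
      rw [Set.disjoint_left]
      intro y hya hyb
      have : y ∉ ⋃ q ∈ S.filter (fun q => r q b), box q := hyb.2
      exact this (Set.mem_biUnion (Finset.mem_filter.mpr ⟨ha, hab⟩) (hOsub a hya))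
    rcases (haveI := hwo; trichotomous (r := r) p q) with h | h | h
    · exact key p q hp h
    · exact absurd h hpq
    · exact (key q p hq h).symm
  have hsum : ∑ p ∈ S, volume (O p) = μU S := by
    rw [← measure_biUnion_finset hdisj (fun p _ => hOmeas p)]
    rw [hUnion]; rfl
  -- finiteness
  have hfin : μU S ≠ ⊤ := by
    refine ne_top_of_le_ne_top ?_ (measure_biUnion_finset_le S box)
    exact (ENNReal.sum_lt_top.mpr (fun p _ => isCompact_Icc.measure_lt_top)).ne
  -- survivors and the uncovered part
  set surv : (Fin d → Fin τ) → (Fin d → ℝ) → Prop :=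
    fun ℓ p => ∀ i, x p i % (τ : ℤ) ≠ ((ℓ i : ℕ) : ℤ) with hsurv
  set f : (Fin d → Fin τ) → ℝ≥0∞ :=
    fun ℓ => volume ((⋃ p ∈ S, box p) \ ⋃ p ∈ S.filter (surv ℓ), box p) with hf
  -- per-offset bound
  have hfle : ∀ ℓ, f ℓ ≤ ∑ p ∈ S.filter (fun p => ¬ surv ℓ p), volume (O p) := by
    intro ℓ
    refine le_trans (measure_mono ?_) (measure_biUnion_finset_le _ _)
    intro y hy
    have hyU : y ∈ ⋃ p ∈ S, O p := by rw [hUnion]; exact hy.1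
    simp only [Set.mem_iUnion, exists_prop] at hyU
    obtain ⟨p, hpS, hyp⟩ := hyU
    have hkill : ¬ surv ℓ p := by
      intro hs
      exact hy.2 (Set.mem_biUnion (Finset.mem_filter.mpr ⟨hpS, hs⟩) (hOsub p hyp))
    exact Set.mem_biUnion (Finset.mem_filter.mpr ⟨hpS, hkill⟩) hyp
  -- sum over offsets
  have hsumℓ : ∑ ℓ : Fin d → Fin τ, f ℓ ≤ (d * τ ^ (d - 1) : ℕ) * μU S := by
    calc ∑ ℓ : Fin d → Fin τ, f ℓ
        ≤ ∑ ℓ : Fin d → Fin τ, ∑ p ∈ S.filter (fun p => ¬ surv ℓ p), volume (O p) :=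
          Finset.sum_le_sum fun ℓ _ => hfle ℓ
      _ = ∑ ℓ : Fin d → Fin τ, ∑ p ∈ S, if ¬ surv ℓ p then volume (O p) else 0 := by
          refine Finset.sum_congr rfl fun ℓ _ => ?_
          rw [Finset.sum_filter]
      _ = ∑ p ∈ S, ∑ ℓ : Fin d → Fin τ, if ¬ surv ℓ p then volume (O p) else 0 :=
          Finset.sum_comm
      _ = ∑ p ∈ S, ((Finset.univ.filter fun ℓ : Fin d → Fin τ => ¬ surv ℓ p).card : ℝ≥0∞)
            * volume (O p) := by
          refine Finset.sum_congr rfl fun p _ => ?_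
          rw [← Finset.sum_filter, Finset.sum_const, nsmul_eq_mul]
      _ ≤ ∑ p ∈ S, (d * τ ^ (d - 1) : ℕ) * volume (O p) := by
          refine Finset.sum_le_sum fun p _ => ?_
          refine mul_le_mul_left ?_ _
          exact_mod_cast kill_card (fun i => x p i % (τ : ℤ))
      _ = (d * τ ^ (d - 1) : ℕ) * μU S := by rw [← Finset.mul_sum, hsum]
  -- pick the minimizing offset
  obtain ⟨ℓ0, -, hmin⟩ := Finset.exists_min_image Finset.univ f Finset.univ_nonempty
  have hcard : (Finset.univ : Finset (Fin d → Fin τ)).card = τ ^ d := by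
    simp [Finset.card_univ]
  have havg : (τ ^ d : ℝ≥0∞) * f ℓ0 ≤ (d * τ ^ (d - 1) : ℕ) * μU S := by
    calc (τ ^ d : ℝ≥0∞) * f ℓ0
        = ((Finset.univ : Finset (Fin d → Fin τ)).card : ℝ≥0∞) * f ℓ0 := by
          rw [hcard]; push_cast; ring
      _ = (Finset.univ : Finset (Fin d → Fin τ)).card • f ℓ0 := by rw [nsmul_eq_mul]
      _ ≤ ∑ ℓ : Fin d → Fin τ, f ℓ := Finset.card_nsmul_le_sum _ _ _ (fun ℓ _ => hmin ℓ (Finset.mem_univ ℓ))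
      _ ≤ _ := hsumℓ
  have hcoef : ((d * τ ^ (d - 1) : ℕ) : ℝ≥0∞) ≤ ENNReal.ofReal ε * (τ : ℝ≥0∞) ^ d := by
    rcases Nat.eq_zero_or_pos d with rfl | hd
    · simp
    · obtain ⟨m, rfl⟩ := Nat.exists_eq_succ_of_ne_zero hd.ne'
      have h1 : ((m + 1 : ℕ) : ℝ≥0∞) ≤ ENNReal.ofReal ε * (τ : ℝ≥0∞) := by
        have := ENNReal.ofReal_le_ofReal hdτ
        rwa [ENNReal.ofReal_mul hε.le, ENNReal.ofReal_natCast, ENNReal.ofReal_natCast] at this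
      calc ((m + 1) * τ ^ (m + 1 - 1) : ℕ) = (((m + 1 : ℕ) : ℝ≥0∞)) * (τ : ℝ≥0∞) ^ m := by
            push_cast; ring_nf
        _ ≤ (ENNReal.ofReal ε * (τ : ℝ≥0∞)) * (τ : ℝ≥0∞) ^ m := mul_le_mul_left h1 _
        _ = ENNReal.ofReal ε * (τ : ℝ≥0∞) ^ (m + 1) := by ring
  have hτd0 : ((τ : ℝ≥0∞) ^ d) ≠ 0 := by
    apply pow_ne_zero; exact_mod_cast hτ.ne'
  have hτdt : ((τ : ℝ≥0∞) ^ d) ≠ ⊤ := by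
    apply ENNReal.pow_ne_top; exact ENNReal.natCast_ne_top τ
  have hf0 : f ℓ0 ≤ ENNReal.ofReal ε * μU S := by
    have h2 : (τ ^ d : ℝ≥0∞) * f ℓ0 ≤ (τ ^ d : ℝ≥0∞) * (ENNReal.ofReal ε * μU S) := by
      refine havg.trans ?_
      calc ((d * τ ^ (d - 1) : ℕ) : ℝ≥0∞) * μU S
          ≤ (ENNReal.ofReal ε * (τ : ℝ≥0∞) ^ d) * μU S := mul_le_mul_left hcoef _
        _ = (τ ^ d : ℝ≥0∞) * (ENNReal.ofReal ε * μU S) := by ring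
    exact (ENNReal.mul_le_mul_iff_right hτd0 hτdt).mp h2
  have main : ENNReal.ofReal (1 - ε) * μU S ≤ μU (S.filter (surv ℓ0)) := by
    by_cases hε1 : 1 ≤ ε
    · have : ENNReal.ofReal (1 - ε) = 0 := ENNReal.ofReal_eq_zero.mpr (by linarith)
      simp [this]
    push_neg at hε1
    have hUsub : (⋃ p ∈ S.filter (surv ℓ0), box p) ⊆ ⋃ p ∈ S, box p :=
      Set.biUnion_subset_biUnion_left (Finset.coe_subset.mpr (Finset.filter_subset _ _))
    have hkey : μU S ≤ μU (S.filter (surv ℓ0)) + ENNReal.ofReal ε * μU S := by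
      have h3 : (⋃ p ∈ S, box p) ⊆ (⋃ p ∈ S.filter (surv ℓ0), box p)
          ∪ ((⋃ p ∈ S, box p) \ ⋃ p ∈ S.filter (surv ℓ0), box p) := by
        intro y hy
        by_cases h : y ∈ ⋃ p ∈ S.filter (surv ℓ0), box p
        · exact Or.inl h
        · exact Or.inr ⟨hy, h⟩
      calc μU S ≤ volume ((⋃ p ∈ S.filter (surv ℓ0), box p)
            ∪ ((⋃ p ∈ S, box p) \ ⋃ p ∈ S.filter (surv ℓ0), box p)) := measure_mono h3
        _ ≤ μU (S.filter (surv ℓ0)) + f ℓ0 := measure_union_le _ _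
        _ ≤ μU (S.filter (surv ℓ0)) + ENNReal.ofReal ε * μU S := add_le_add_right hf0 _
    have hadd : ENNReal.ofReal (1 - ε) * μU S + ENNReal.ofReal ε * μU S = μU S := by
      rw [← add_mul, ← ENNReal.ofReal_add (by linarith) hε.le]
      norm_num
    have h4 : ENNReal.ofReal (1 - ε) * μU S + ENNReal.ofReal ε * μU S
        ≤ μU (S.filter (surv ℓ0)) + ENNReal.ofReal ε * μU S := by
      rw [hadd]; exact hkey
    exact (ENNReal.add_le_add_iff_right
      (ENNReal.mul_ne_top ENNReal.ofReal_ne_top hfin)).mp h4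
  refine ⟨ℓ0, main, ?_⟩
  · -- VolSel bound
    have h1 : ENNReal.ofReal (1 - ε) * VolSel P k ≤ μU (S.filter (surv ℓ0)) := by
      rw [← hSopt]; exact main
    refine h1.trans ?_
    apply Finset.le_sup
    simp only [Finset.mem_filter, Finset.mem_powerset]
    exact ⟨Finset.filter_subset_filter _ hSP, le_trans (Finset.card_filter_le _ _) hSk⟩
end

section
/- Near-independence of cells (d-dimensional, abstract form): let λ ≥ d/ε, and let S₁,…,S_m be finite sets in ℝ^d_{>0} such that for each i and each j < i there exists a coordinate t and a threshold δ_t > 0 with: every point of S_j has t-th coordinate at most δ_t, and every point of S_i has t-th coordinate at least λ·δ_t. Then (1−ε)·∑_{i=1}^m μ(S_i) ≤ μ(⋃_{i=1}^m S_i) ≤ ∑_{i=1}^m μ(S_i). -/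
open MeasureTheory
open scoped ENNReal

lemma measU {d : ℕ} (S : Finset (Fin d → ℝ)) :
    MeasurableSet (⋃ p ∈ S, Set.Icc (0 : Fin d → ℝ) p) :=
  MeasurableSet.biUnion S.countable_toSet fun _ _ => measurableSet_Icc

lemma μU_ne_top {d : ℕ} (S : Finset (Fin d → ℝ)) : μU S ≠ ∞ := by
  have h : μU S ≤ ∑ p ∈ S, volume (Set.Icc (0 : Fin d → ℝ) p) :=
    measure_biUnion_finset_le S _
  exact ne_top_of_le_ne_top
    (ENNReal.sum_lt_top.2 fun p _ => isCompact_Icc.measure_lt_top).ne h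

lemma slab_bound {d : ℕ} (L δ : ℝ) (hδ : 0 < δ) (hL : 1 ≤ L) (t : Fin d)
    (S : Finset (Fin d → ℝ)) (h : ∀ p ∈ S, L * δ ≤ p t) :
    ENNReal.ofReal L * volume ((⋃ p ∈ S, Set.Icc (0 : Fin d → ℝ) p) ∩ {x | x t ≤ δ})
      ≤ μU S := by
  have hL0 : (0 : ℝ) < L := lt_of_lt_of_le one_pos hL
  -- truncation
  have htrunc : (⋃ p ∈ S, Set.Icc (0 : Fin d → ℝ) p) ∩ {x | x t ≤ δ}
      = ⋃ p ∈ S, Set.Icc (0 : Fin d → ℝ) (Function.update p t δ) := by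
    ext x
    simp only [Set.mem_inter_iff, Set.mem_iUnion, Set.mem_Icc, Set.mem_setOf_eq, Pi.le_def,
      exists_prop]
    constructor
    · rintro ⟨⟨p, hp, h0, hxp⟩, hxt⟩
      refine ⟨p, hp, h0, fun j => ?_⟩
      rcases eq_or_ne j t with rfl | hj
      · simpa using hxt
      · simpa [Function.update_of_ne hj] using hxp j
    · rintro ⟨p, hp, h0, hx⟩
      have h1 : x t ≤ δ := by simpa using hx t
      refine ⟨⟨p, hp, h0, fun j => ?_⟩, h1⟩
      rcases eq_or_ne j t with rfl | hj
      · calc x j ≤ δ := h1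
          _ ≤ L * δ := le_mul_of_one_le_left hδ.le hL
          _ ≤ p j := h p hp
      · simpa [Function.update_of_ne hj] using hx j
  -- the scaling linear map
  set w : Fin d → ℝ := fun j => if j = t then L⁻¹ else 1 with hw
  set f : (Fin d → ℝ) →ₗ[ℝ] (Fin d → ℝ) := Matrix.toLin' (Matrix.diagonal w) with hf
  have hfapp : ∀ x : Fin d → ℝ, ∀ j, f x j = w j * x j := by
    intro x j
    simp [hf, Matrix.toLin'_apply, Matrix.mulVec_diagonal]
  have hdet : LinearMap.det f = L⁻¹ := by
    rw [hf, LinearMap.det_toLin', Matrix.det_diagonal]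
    simp [hw]
  have hdet0 : LinearMap.det f ≠ 0 := by
    rw [hdet]; positivity
  have hpre : ∀ p : Fin d → ℝ,
      f ⁻¹' Set.Icc (0 : Fin d → ℝ) (Function.update p t δ)
        = Set.Icc (0 : Fin d → ℝ) (Function.update p t (L * δ)) := by
    intro p
    have hcomp : ∀ x : Fin d → ℝ, ∀ j : Fin d,
        (0 ≤ f x j ∧ f x j ≤ Function.update p t δ j)
          ↔ (0 ≤ x j ∧ x j ≤ Function.update p t (L * δ) j) := by
      intro x j
      rw [hfapp]
      rcases eq_or_ne j t with rfl | hj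
      · simp only [hw, if_pos rfl, Function.update_self]
        constructor
        · rintro ⟨a, b⟩
          refine ⟨?_, ?_⟩
          · have := mul_nonneg hL0.le a
            rwa [← mul_assoc, mul_inv_cancel₀ hL0.ne', one_mul] at this
          · rwa [inv_mul_le_iff₀ hL0] at b
        · rintro ⟨a, b⟩
          exact ⟨mul_nonneg (by positivity) a, by rwa [inv_mul_le_iff₀ hL0]⟩
      · simp [hw, hj, Function.update_of_ne hj]
    ext x
    simp only [Set.mem_preimage, Set.mem_Icc, Pi.le_def, Pi.zero_apply]
    constructor
    · rintro ⟨a, b⟩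
      exact ⟨fun j => ((hcomp x j).1 ⟨a j, b j⟩).1, fun j => ((hcomp x j).1 ⟨a j, b j⟩).2⟩
    · rintro ⟨a, b⟩
      exact ⟨fun j => ((hcomp x j).2 ⟨a j, b j⟩).1, fun j => ((hcomp x j).2 ⟨a j, b j⟩).2⟩
  rw [htrunc]
  have hvol := Measure.addHaar_preimage_linearMap (volume : Measure (Fin d → ℝ)) hdet0
    (⋃ p ∈ S, Set.Icc (0 : Fin d → ℝ) (Function.update p t δ))
  rw [hdet, inv_inv, abs_of_pos hL0] at hvol
  rw [← hvol]
  apply measure_mono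
  rw [Set.preimage_iUnion₂]
  refine Set.iUnion₂_mono fun p hp => ?_
  rw [hpre p]
  apply Set.Icc_subset_Icc le_rfl
  intro j
  rcases eq_or_ne j t with rfl | hj
  · rw [Function.update_self]; exact h p hp
  · rw [Function.update_of_ne hj]

/-- Near-independence of cells: if for each pair `j < i` there is a coordinate `t` and a
threshold `δ > 0` with all points of `S j` having `t`-th coordinate `≤ δ` and all points of
`S i` having `t`-th coordinate `≥ λ·δ`, where `λ ≥ d/ε`, then
`(1-ε)·∑ μ(S i) ≤ μ(⋃ S i) ≤ ∑ μ(S i)`. -/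
theorem stmt13 {d m : ℕ} (ε L : ℝ) (hε : 0 < ε) (hε2 : ε ≤ 1 / 2)
    (hL : (d : ℝ) / ε ≤ L) (S : Fin m → Finset (Fin d → ℝ))
    (hpos : ∀ i, ∀ p ∈ S i, ∀ j, 0 < p j)
    (hsep : ∀ i j : Fin m, j < i → ∃ t : Fin d, ∃ δ : ℝ, 0 < δ ∧
      (∀ p ∈ S j, p t ≤ δ) ∧ (∀ p ∈ S i, L * δ ≤ p t)) :
    ENNReal.ofReal (1 - ε) * ∑ i, μU (S i)
        ≤ volume (⋃ i, ⋃ p ∈ S i, Set.Icc (0 : Fin d → ℝ) p) ∧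
      volume (⋃ i, ⋃ p ∈ S i, Set.Icc (0 : Fin d → ℝ) p) ≤ ∑ i, μU (S i) := by
  classical
  set U : Fin m → Set (Fin d → ℝ) := fun i => ⋃ p ∈ S i, Set.Icc (0 : Fin d → ℝ) p with hU
  have hUmeas : ∀ i, MeasurableSet (U i) := fun i => measU (S i)
  set V : Fin m → Set (Fin d → ℝ) :=
    fun i => ⋃ j ∈ Finset.univ.filter (· < i), U j with hV
  have hVmeas : ∀ i, MeasurableSet (V i) :=
    fun i => MeasurableSet.biUnion (Finset.countable_toSet _) fun j _ => hUmeas j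
  -- key per-index bound
  have hkey : ∀ i : Fin m,
      volume (U i ∩ V i) ≤ ENNReal.ofReal ε * μU (S i) := by
    intro i
    rcases (Finset.univ.filter (· < i)).eq_empty_or_nonempty with hFe | ⟨j0, hj0⟩
    · have hVi : V i = ∅ := by simp only [hV]; rw [hFe]; simp
      rw [hVi, Set.inter_empty, measure_empty]
      exact zero_le
    · have hj0i : j0 < i := (Finset.mem_filter.1 hj0).2
      choose tt dd hdd hup hlow using fun (j : Fin m) (hj : j < i) => hsep i j hj
      have hd1 : (1 : ℝ) ≤ d := by
        have : 0 < d := (tt j0 hj0i).pos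
        exact_mod_cast this
      have hL1 : (1 : ℝ) ≤ L := le_trans ((one_le_div hε).2 (by linarith)) hL
      have hL0 : (0 : ℝ) < L := lt_of_lt_of_le one_pos hL1
      set t' : Fin m → Fin d := fun j => if h : j < i then tt j h else tt j0 hj0i with ht'
      set δ' : Fin m → ℝ := fun j => if h : j < i then dd j h else 1 with hδ'
      have ht'eq : ∀ j (h : j < i), t' j = tt j h := fun j h => dif_pos h
      have hδ'eq : ∀ j (h : j < i), δ' j = dd j h := fun j h => dif_pos h
      set G : Fin d → Finset (Fin m) :=
        fun s => (Finset.univ.filter (· < i)).filter (fun j => t' j = s) with hG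
      have hB : ∀ s : Fin d, ∃ B : Set (Fin d → ℝ), (∀ j ∈ G s, U j ⊆ B) ∧
          ENNReal.ofReal L * volume (U i ∩ B) ≤ μU (S i) := by
        intro s
        rcases (G s).eq_empty_or_nonempty with hGe | hGne
        · exact ⟨∅, by simp [hGe], by simp⟩
        · obtain ⟨j1, hj1, hmax⟩ := Finset.exists_max_image (G s) δ' hGne
          have hj1i : j1 < i := (Finset.mem_filter.1 ((Finset.mem_filter.1 hj1).1)).2
          have ht1 : tt j1 hj1i = s := by
            rw [← ht'eq j1 hj1i]; exact (Finset.mem_filter.1 hj1).2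
          have hδ1pos : 0 < δ' j1 := by rw [hδ'eq j1 hj1i]; exact hdd j1 hj1i
          refine ⟨{x | x s ≤ δ' j1}, ?_, ?_⟩
          · intro j hj x hx
            have hji : j < i := (Finset.mem_filter.1 ((Finset.mem_filter.1 hj).1)).2
            have htj : tt j hji = s := by
              rw [← ht'eq j hji]; exact (Finset.mem_filter.1 hj).2
            simp only [hU, Set.mem_iUnion, Set.mem_Icc, exists_prop] at hx
            obtain ⟨p, hp, _, hxp⟩ := hx
            have h1 : x s ≤ p s := hxp s
            have h2 : p s ≤ δ' j := by
              rw [hδ'eq j hji, ← htj]; exact hup j hji p hp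
            exact Set.mem_setOf_eq ▸ (h1.trans (h2.trans (hmax j hj)))
          · have hlow' : ∀ p ∈ S i, L * δ' j1 ≤ p s := by
              intro p hp
              rw [hδ'eq j1 hj1i, ← ht1]; exact hlow j1 hj1i p hp
            have := slab_bound L (δ' j1) hδ1pos hL1 s (S i) hlow'
            simpa [hU] using this
      choose B hB1 hB2 using hB
      have hcover : U i ∩ V i ⊆ ⋃ s, (U i ∩ B s) := by
        rintro x ⟨hxi, hxj⟩
        simp only [hV, Set.mem_iUnion, exists_prop] at hxj
        obtain ⟨j, hjF, hxj⟩ := hxj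
        have hjmem : j ∈ G (t' j) := Finset.mem_filter.2 ⟨hjF, rfl⟩
        exact Set.mem_iUnion.2 ⟨t' j, hxi, hB1 (t' j) j hjmem hxj⟩
      have hLne0 : ENNReal.ofReal L ≠ 0 := by
        simp [ENNReal.ofReal_eq_zero, not_le, hL0]
      have hterm : ∀ s : Fin d, volume (U i ∩ B s) ≤ μU (S i) / ENNReal.ofReal L := by
        intro s
        rw [ENNReal.le_div_iff_mul_le (Or.inl hLne0) (Or.inl ENNReal.ofReal_ne_top)]
        rw [mul_comm]
        exact hB2 s
      have hdL : (d : ℝ≥0∞) / ENNReal.ofReal L ≤ ENNReal.ofReal ε := by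
        rw [ENNReal.div_le_iff hLne0 ENNReal.ofReal_ne_top, ← ENNReal.ofReal_mul hε.le,
          ← ENNReal.ofReal_natCast d]
        have hdε : (d : ℝ) ≤ ε * L := by
          have := (div_le_iff₀ hε).1 hL
          linarith
        exact ENNReal.ofReal_le_ofReal hdε
      calc volume (U i ∩ V i) ≤ volume (⋃ s, U i ∩ B s) := measure_mono hcover
        _ ≤ ∑ s, volume (U i ∩ B s) := measure_iUnion_fintype_le _ _
        _ ≤ ∑ _s : Fin d, μU (S i) / ENNReal.ofReal L :=
            Finset.sum_le_sum fun s _ => hterm s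
        _ = (d : ℝ≥0∞) * (μU (S i) / ENNReal.ofReal L) := by
            rw [Finset.sum_const, Finset.card_univ, Fintype.card_fin, nsmul_eq_mul]
        _ = ((d : ℝ≥0∞) / ENNReal.ofReal L) * μU (S i) := by
            rw [ENNReal.div_eq_inv_mul, ENNReal.div_eq_inv_mul]; ring
        _ ≤ ENNReal.ofReal ε * μU (S i) := mul_le_mul_left hdL _
  -- disjointified sets
  set D : Fin m → Set (Fin d → ℝ) := fun i => U i \ V i with hD
  have hDmeas : ∀ i, MeasurableSet (D i) := fun i => (hUmeas i).diff (hVmeas i)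
  have hdj : ∀ a b : Fin m, b < a → Disjoint (D a) (D b) := by
    intro a b hba
    refine Set.disjoint_left.2 fun x hxa hxb => ?_
    refine hxa.2 ?_
    have : b ∈ Finset.univ.filter (· < a) := Finset.mem_filter.2 ⟨Finset.mem_univ b, hba⟩
    exact Set.mem_biUnion this hxb.1
  have hDdisj : Pairwise (Function.onFun Disjoint D) := by
    intro i j hij
    rcases lt_or_gt_of_ne hij with h | h
    · exact (hdj j i h).symm
    · exact hdj i j h
  have hsum : volume (⋃ i, D i) = ∑' i, volume (D i) := measure_iUnion hDdisj hDmeas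
  have hDlow : ∀ i, ENNReal.ofReal (1 - ε) * μU (S i) ≤ volume (D i) := by
    intro i
    have h1 : μU (S i) ≤ volume (D i) + volume (U i ∩ V i) := by
      calc μU (S i) = volume (U i) := rfl
        _ = volume (D i ∪ (U i ∩ V i)) := by rw [hD]; rw [Set.diff_union_inter]
        _ ≤ volume (D i) + volume (U i ∩ V i) := measure_union_le _ _
    have h3 : μU (S i) ≤ volume (D i) + ENNReal.ofReal ε * μU (S i) :=
      h1.trans (add_le_add le_rfl (hkey i))
    have hne : ENNReal.ofReal ε * μU (S i) ≠ ∞ :=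
      ENNReal.mul_ne_top ENNReal.ofReal_ne_top (μU_ne_top _)
    rw [← ENNReal.add_le_add_iff_right hne]
    calc ENNReal.ofReal (1 - ε) * μU (S i) + ENNReal.ofReal ε * μU (S i)
        = (ENNReal.ofReal (1 - ε) + ENNReal.ofReal ε) * μU (S i) := (add_mul _ _ _).symm
      _ = μU (S i) := by
          rw [← ENNReal.ofReal_add (by linarith) hε.le]
          norm_num
      _ ≤ volume (D i) + ENNReal.ofReal ε * μU (S i) := h3
  constructor
  · calc ENNReal.ofReal (1 - ε) * ∑ i, μU (S i)
        = ∑ i, ENNReal.ofReal (1 - ε) * μU (S i) := Finset.mul_sum _ _ _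
      _ ≤ ∑ i, volume (D i) := Finset.sum_le_sum fun i _ => hDlow i
      _ = ∑' i, volume (D i) := (tsum_fintype _).symm
      _ = volume (⋃ i, D i) := hsum.symm
      _ ≤ volume (⋃ i, U i) := measure_mono (Set.iUnion_mono fun i => Set.diff_subset)
  · calc volume (⋃ i, U i) ≤ ∑ i, volume (U i) := measure_iUnion_fintype_le _ _
      _ = ∑ i, μU (S i) := rfl
end

section
/- Slab volume bound: let S be a finite set of points in ℝ^d_{>0} all of whose t-th coordinates are at least λ·δ for some λ ≥ 1 and δ > 0. Let D = {z ∈ ℝ^d_{≥0} : z_t ≤ δ}. Then vol(𝒰(S) ∩ D) ≤ μ(S)/λ, where 𝒰(S) = ⋃_{p∈S} box(p) and μ(S) = vol(𝒰(S)). -/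
open MeasureTheory
open scoped ENNReal

/-- Slab volume bound: if all points of `S` have `t`-th coordinate at least `λ·δ` with
`λ ≥ 1` and `δ > 0`, then the volume of `𝒰(S)` inside the slab `{z ≥ 0 : z t ≤ δ}` is at
most `μ(S)/λ`. -/
theorem stmt14 {d : ℕ} (S : Finset (Fin d → ℝ)) (hS : ∀ p ∈ S, ∀ i, 0 < p i)
    (t : Fin d) (L δ : ℝ) (hL : 1 ≤ L) (hδ : 0 < δ) (hcoord : ∀ p ∈ S, L * δ ≤ p t) :
    volume ((⋃ p ∈ S, Set.Icc (0 : Fin d → ℝ) p) ∩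
        {z : Fin d → ℝ | (∀ i, 0 ≤ z i) ∧ z t ≤ δ})
      ≤ μU S / ENNReal.ofReal L := by
  classical
  set U : Set (Fin d → ℝ) := ⋃ p ∈ S, Set.Icc (0 : Fin d → ℝ) p with hU
  set E : Set (Fin d → ℝ) :=
    U ∩ {z : Fin d → ℝ | (∀ i, 0 ≤ z i) ∧ z t ≤ δ} with hE
  set f : (Fin d → ℝ) →ₗ[ℝ] (Fin d → ℝ) :=
    Matrix.toLin' (Matrix.diagonal fun i => if i = t then L else (1 : ℝ)) with hf
  have hL0 : (0 : ℝ) ≤ L := le_trans zero_le_one hL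
  have hdet : LinearMap.det f = L := by
    rw [hf, LinearMap.det_toLin', Matrix.det_diagonal]
    simp [Finset.prod_ite_eq']
  have hfapp : ∀ z : Fin d → ℝ, ∀ i, f z i = if i = t then L * z i else z i := by
    intro z i
    simp [hf, Matrix.toLin'_apply, Matrix.mulVec_diagonal]
  have himg : f '' E ⊆ U := by
    rintro _ ⟨z, ⟨hzU, hz0, hzt⟩, rfl⟩
    rcases Set.mem_iUnion₂.1 hzU with ⟨p, hp, hzp⟩
    refine Set.mem_iUnion₂.2 ⟨p, hp, ?_⟩
    constructor
    · intro i
      rw [hfapp]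
      split
      · exact mul_nonneg hL0 (hz0 i)
      · exact hz0 i
    · intro i
      rw [hfapp]
      split
      · rename_i h; subst h
        calc L * z i ≤ L * δ := mul_le_mul_of_nonneg_left hzt hL0
          _ ≤ p i := hcoord p hp
      · exact hzp.2 i
  have hscale : volume (f '' E) = ENNReal.ofReal L * volume E := by
    rw [MeasureTheory.Measure.addHaar_image_linearMap, hdet, abs_of_nonneg hL0]
  have hle : ENNReal.ofReal L * volume E ≤ μU S := by
    rw [← hscale]
    exact measure_mono himg
  rw [ENNReal.le_div_iff_mul_le (Or.inl (by simpa [ENNReal.ofReal_eq_zero] using lt_of_lt_of_le zero_lt_one hL)) (Or.inl ENNReal.ofReal_ne_top)]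
  rw [mul_comm]
  exact hle
end

section
/- Near-independent knapsack splitting: under the hypotheses of the near-independence lemma (finite sets P₁,…,P_m satisfying the coordinate-separation condition with parameter λ ≥ d/ε), with P = ⋃_i P_i, for every k: (1−ε)·max{∑_i VolSel(P_i,k_i) : k₁+…+k_m ≤ k} ≤ VolSel(P,k) ≤ max{∑_i VolSel(P_i,k_i) : k₁+…+k_m ≤ k}. -/
open MeasureTheory
open Set
open scoped ENNReal

lemma scale_bound {d : ℕ} (S : Finset (Fin d → ℝ)) (t : Fin d) (δ c : ℝ) (hc : 0 < c)
    (h : ∀ p ∈ S, c * δ ≤ p t) :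
    ENNReal.ofReal c * volume ((⋃ p ∈ S, Icc (0 : Fin d → ℝ) p) ∩ {x | x t ≤ δ})
      ≤ volume (⋃ p ∈ S, Icc (0 : Fin d → ℝ) p) := by
  set f : (Fin d → ℝ) →ₗ[ℝ] (Fin d → ℝ) :=
    Matrix.toLin' (Matrix.diagonal fun j => if j = t then c else 1) with hf
  have hdet : LinearMap.det f = c := by
    rw [hf, LinearMap.det_toLin', Matrix.det_diagonal]
    simp [Finset.prod_ite_eq']
  have himg : f '' ((⋃ p ∈ S, Icc (0 : Fin d → ℝ) p) ∩ {x | x t ≤ δ})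
      ⊆ ⋃ p ∈ S, Icc (0 : Fin d → ℝ) p := by
    rintro _ ⟨x, ⟨hxU, hxt⟩, rfl⟩
    simp only [mem_iUnion] at hxU ⊢
    obtain ⟨p, hp, hx0, hx1⟩ := hxU
    refine ⟨p, hp, ?_, ?_⟩
    · intro j
      have : f x j = (if j = t then c else 1) * x j := by
        simp [hf, Matrix.toLin'_apply, Matrix.mulVec_diagonal]
      rw [this]
      have h0j : (0:ℝ) ≤ x j := by simpa using hx0 j
      simp only [Pi.zero_apply]
      positivity
    · intro j
      have hfx : f x j = (if j = t then c else 1) * x j := by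
        simp [hf, Matrix.toLin'_apply, Matrix.mulVec_diagonal]
      rw [hfx]
      by_cases hj : j = t
      · subst hj
        simp only [if_pos rfl]
        have hxtj : x j ≤ δ := hxt
        calc c * x j ≤ c * δ := mul_le_mul_of_nonneg_left hxtj hc.le
          _ ≤ p j := h p hp
      · simpa [hj] using hx1 j
  have := measure_mono (μ := volume) himg
  rwa [Measure.addHaar_image_linearMap, hdet, abs_of_pos hc] at this

lemma boxU_meas {d : ℕ} (S : Finset (Fin d → ℝ)) :
    MeasurableSet (⋃ p ∈ S, Icc (0 : Fin d → ℝ) p) :=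
  S.measurableSet_biUnion fun _ _ => measurableSet_Icc

lemma μU_lt_top {d : ℕ} (S : Finset (Fin d → ℝ)) : μU S < ⊤ := by
  refine lt_of_le_of_lt (measure_biUnion_finset_le S _) ?_
  refine ENNReal.sum_lt_top.mpr fun p _ => ?_
  rw [Real.volume_Icc_pi]
  exact ENNReal.prod_lt_top fun j _ => ENNReal.ofReal_lt_top

lemma IE {α : Type*} [MeasurableSpace α] (μ : Measure α) (U : ℕ → Set α)
    (hm : ∀ i, MeasurableSet (U i)) (n : ℕ) :
    ∑ i ∈ Finset.range n, μ (U i) ≤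
      μ (⋃ i ∈ Finset.range n, U i) +
        ∑ i ∈ Finset.range n, μ (U i ∩ ⋃ j ∈ Finset.range i, U j) := by
  induction n with
  | zero => simp
  | succ n ih =>
    have hWm : MeasurableSet (⋃ j ∈ Finset.range n, U j) :=
      (Finset.range n).measurableSet_biUnion fun j _ => hm j
    have hun : (⋃ i ∈ Finset.range (n+1), U i)
        = U n ∪ ⋃ j ∈ Finset.range n, U j := by
      rw [Finset.range_add_one]; simp [Set.biUnion_insert]
    rw [Finset.sum_range_succ, Finset.sum_range_succ, hun]
    have key : μ (U n ∪ ⋃ j ∈ Finset.range n, U j) +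
        μ (U n ∩ ⋃ j ∈ Finset.range n, U j)
        = μ (U n) + μ (⋃ j ∈ Finset.range n, U j) :=
      measure_union_add_inter (U n) hWm
    calc ∑ i ∈ Finset.range n, μ (U i) + μ (U n)
        ≤ (μ (⋃ i ∈ Finset.range n, U i) +
            ∑ i ∈ Finset.range n, μ (U i ∩ ⋃ j ∈ Finset.range i, U j)) + μ (U n) :=
          add_le_add_left ih _
      _ = (μ (U n) + μ (⋃ j ∈ Finset.range n, U j)) +
            ∑ i ∈ Finset.range n, μ (U i ∩ ⋃ j ∈ Finset.range i, U j) := by ring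
      _ = (μ (U n ∪ ⋃ j ∈ Finset.range n, U j) +
            μ (U n ∩ ⋃ j ∈ Finset.range n, U j)) +
            ∑ i ∈ Finset.range n, μ (U i ∩ ⋃ j ∈ Finset.range i, U j) := by rw [key]
      _ = _ := by ring

lemma overlap_bound {d m : ℕ} (ε L : ℝ) (hε : 0 < ε)
    (hL : (d : ℝ) / ε ≤ L) (S : Fin m → Finset (Fin d → ℝ)) (i : Fin m)
    (hsep : ∀ j : Fin m, j < i → ∃ t : Fin d, ∃ δ : ℝ, 0 < δ ∧
      (∀ p ∈ S j, p t ≤ δ) ∧ (∀ p ∈ S i, L * δ ≤ p t)) :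
    volume ((⋃ p ∈ S i, Icc (0 : Fin d → ℝ) p) ∩
        ⋃ (j : Fin m) (_ : j < i), ⋃ p ∈ S j, Icc (0 : Fin d → ℝ) p)
      ≤ ENNReal.ofReal ε * volume (⋃ p ∈ S i, Icc (0 : Fin d → ℝ) p) := by
  set Ui := ⋃ p ∈ S i, Icc (0 : Fin d → ℝ) p with hUi
  have hsep' : ∀ j : {j : Fin m // j < i}, ∃ t : Fin d, ∃ δ : ℝ, 0 < δ ∧
      (∀ p ∈ S j.1, p t ≤ δ) ∧ (∀ p ∈ S i, L * δ ≤ p t) := fun j => hsep j.1 j.2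
  choose tt dd hdd h1 h2 using hsep'
  set A : {j : Fin m // j < i} → Set (Fin d → ℝ) :=
    fun j => Ui ∩ {x | x (tt j) ≤ dd j} with hA
  set T : Finset (Fin d) := Finset.image tt Finset.univ with hT
  set B : Fin d → Set (Fin d → ℝ) :=
    fun s => ⋃ (j : {j : Fin m // j < i}) (_ : tt j = s), A j with hB
  have cover : Ui ∩ (⋃ (j : Fin m) (_ : j < i), ⋃ p ∈ S j, Icc (0 : Fin d → ℝ) p)
      ⊆ ⋃ s ∈ T, B s := by
    rintro x ⟨hxi, hxW⟩
    simp only [mem_iUnion] at hxW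
    obtain ⟨j, hj, p, hp, hx0, hx1⟩ := hxW
    have hxt : x (tt ⟨j, hj⟩) ≤ dd ⟨j, hj⟩ :=
      le_trans (hx1 (tt ⟨j, hj⟩)) (h1 ⟨j, hj⟩ p hp)
    refine mem_biUnion (Finset.mem_image.mpr ⟨⟨j, hj⟩, Finset.mem_univ _, rfl⟩) ?_
    exact mem_iUnion.mpr ⟨⟨j, hj⟩, mem_iUnion.mpr ⟨rfl, hxi, hxt⟩⟩
  have perterm : ∀ s ∈ T, volume (B s) ≤ ENNReal.ofReal (ε / d) * volume Ui := by
    intro s hs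
    have hd1 : (1 : ℝ) ≤ d := by
      have : (0 : ℕ) < d := Fin.pos s
      exact_mod_cast this
    have hde : (0 : ℝ) < (d : ℝ) / ε := div_pos (by linarith) hε
    have hL0 : (0 : ℝ) < L := lt_of_lt_of_le hde hL
    have hfib : (Finset.univ.filter (fun j => tt j = s)).Nonempty := by
      obtain ⟨j, _, hj⟩ := Finset.mem_image.mp hs
      exact ⟨j, Finset.mem_filter.mpr ⟨Finset.mem_univ _, hj⟩⟩
    obtain ⟨j0, hj0mem, hj0max⟩ :=
      Finset.exists_max_image (Finset.univ.filter (fun j => tt j = s)) dd hfib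
    have hts : tt j0 = s := (Finset.mem_filter.mp hj0mem).2
    have hBsub : B s ⊆ A j0 := by
      rintro x hx
      simp only [hB, mem_iUnion] at hx
      obtain ⟨j, hjs, hxA⟩ := hx
      refine ⟨hxA.1, ?_⟩
      have hddj : dd j ≤ dd j0 :=
        hj0max j (Finset.mem_filter.mpr ⟨Finset.mem_univ _, hjs⟩)
      have : x (tt j0) = x (tt j) := by rw [hts, hjs]
      simp only [mem_setOf_eq, this]
      exact le_trans hxA.2 hddj
    have sb := scale_bound (S i) (tt j0) (dd j0) L hL0 (h2 j0)
    have hLne : ENNReal.ofReal L ≠ 0 := (ENNReal.ofReal_pos.mpr hL0).ne'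
    have step1 : volume (A j0) ≤ (ENNReal.ofReal L)⁻¹ * volume Ui := by
      have : volume (A j0) = (ENNReal.ofReal L)⁻¹ * (ENNReal.ofReal L * volume (A j0)) := by
        rw [← mul_assoc, ENNReal.inv_mul_cancel hLne ENNReal.ofReal_ne_top, one_mul]
      rw [this]
      exact mul_le_mul_right sb _
    have step2 : (ENNReal.ofReal L)⁻¹ ≤ ENNReal.ofReal (ε / d) := by
      rw [← ENNReal.ofReal_inv_of_pos hL0]
      apply ENNReal.ofReal_le_ofReal
      calc L⁻¹ ≤ ((d : ℝ) / ε)⁻¹ := inv_anti₀ hde hL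
        _ = ε / d := by rw [inv_div]
    calc volume (B s) ≤ volume (A j0) := measure_mono hBsub
      _ ≤ (ENNReal.ofReal L)⁻¹ * volume Ui := step1
      _ ≤ ENNReal.ofReal (ε / d) * volume Ui := mul_le_mul_left step2 _
  calc volume (Ui ∩ ⋃ (j : Fin m) (_ : j < i), ⋃ p ∈ S j, Icc (0 : Fin d → ℝ) p)
      ≤ volume (⋃ s ∈ T, B s) := measure_mono cover
    _ ≤ ∑ s ∈ T, volume (B s) := measure_biUnion_finset_le T B
    _ ≤ ∑ s ∈ T, ENNReal.ofReal (ε / d) * volume Ui := Finset.sum_le_sum perterm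
    _ ≤ ENNReal.ofReal ε * volume Ui := by
        rcases T.eq_empty_or_nonempty with h | ⟨s, hs⟩
        · simp [h]
        · have hd0 : d ≠ 0 := Fin.pos s |>.ne'
          rw [Finset.sum_const, nsmul_eq_mul]
          have hcard : (T.card : ℝ≥0∞) ≤ (d : ℝ≥0∞) := by
            exact_mod_cast Nat.cast_le.mpr (le_trans (Finset.card_le_univ T) (by simp))
          calc (T.card : ℝ≥0∞) * (ENNReal.ofReal (ε / d) * volume Ui)
              ≤ (d : ℝ≥0∞) * (ENNReal.ofReal (ε / d) * volume Ui) :=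
                mul_le_mul_left hcard _
            _ = ENNReal.ofReal ε * volume Ui := by
                rw [← mul_assoc, ← ENNReal.ofReal_natCast d, ← ENNReal.ofReal_mul (by positivity)]
                congr 2
                field_simp

lemma mainLower {d m : ℕ} (ε L : ℝ) (hε : 0 < ε) (hε1 : ε ≤ 1)
    (hL : (d : ℝ) / ε ≤ L) (S : Fin m → Finset (Fin d → ℝ))
    (hsep : ∀ i j : Fin m, j < i → ∃ t : Fin d, ∃ δ : ℝ, 0 < δ ∧
      (∀ p ∈ S j, p t ≤ δ) ∧ (∀ p ∈ S i, L * δ ≤ p t)) :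
    ENNReal.ofReal (1 - ε) * ∑ i, μU (S i) ≤ μU (Finset.univ.biUnion S) := by
  classical
  set Us : Fin m → Set (Fin d → ℝ) := fun i => ⋃ p ∈ S i, Icc (0 : Fin d → ℝ) p with hUs
  set U : ℕ → Set (Fin d → ℝ) := fun n => if h : n < m then Us ⟨n, h⟩ else ∅ with hU
  have hUpos : ∀ n (h : n < m), U n = Us ⟨n, h⟩ := fun n h => dif_pos h
  have hUneg : ∀ n, ¬ n < m → U n = ∅ := fun n h => dif_neg h
  have hUval : ∀ i : Fin m, U i.val = Us i := fun i => dif_pos i.2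
  have hm : ∀ n, MeasurableSet (U n) := by
    intro n
    by_cases h : n < m
    · rw [hUpos n h]; exact boxU_meas _
    · rw [hUneg n h]; exact MeasurableSet.empty
  have key := IE volume U hm m
  have hsum1 : ∑ n ∈ Finset.range m, volume (U n) = ∑ i : Fin m, volume (Us i) := by
    rw [← Fin.sum_univ_eq_sum_range (fun n => volume (U n)) m]
    exact Finset.sum_congr rfl fun i _ => by rw [hUval]
  have hbig : (⋃ n ∈ Finset.range m, U n) = ⋃ i : Fin m, Us i := by
    ext x
    simp only [Finset.mem_range, mem_iUnion]
    constructor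
    · rintro ⟨n, hn, hx⟩
      rw [hUpos n hn] at hx
      exact ⟨⟨n, hn⟩, hx⟩
    · rintro ⟨i, hx⟩
      exact ⟨i.1, i.2, (hUval i).symm ▸ hx⟩
  have hint : ∑ n ∈ Finset.range m, volume (U n ∩ ⋃ j ∈ Finset.range n, U j)
      ≤ ∑ i : Fin m, ENNReal.ofReal ε * volume (Us i) := by
    rw [← Fin.sum_univ_eq_sum_range (fun n => volume (U n ∩ ⋃ j ∈ Finset.range n, U j)) m]
    refine Finset.sum_le_sum fun i _ => ?_
    have hsub : U i.val ∩ ⋃ j ∈ Finset.range i.val, U j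
        ⊆ Us i ∩ ⋃ (j : Fin m) (_ : j < i), Us j := by
      rintro x ⟨hx1, hx2⟩
      rw [hUval] at hx1
      refine ⟨hx1, ?_⟩
      simp only [Finset.mem_range, mem_iUnion] at hx2 ⊢
      obtain ⟨n, hn, hx⟩ := hx2
      have hnm : n < m := lt_trans hn i.2
      rw [hUpos n hnm] at hx
      exact ⟨⟨n, hnm⟩, by simpa [Fin.lt_def] using hn, hx⟩
    exact le_trans (measure_mono hsub)
      (overlap_bound ε L hε hL S i (fun j hj => hsep i j hj))
  have hchain : ∑ i : Fin m, volume (Us i)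
      ≤ volume (⋃ i : Fin m, Us i) + ENNReal.ofReal ε * ∑ i : Fin m, volume (Us i) := by
    calc ∑ i : Fin m, volume (Us i) = ∑ n ∈ Finset.range m, volume (U n) := hsum1.symm
      _ ≤ volume (⋃ n ∈ Finset.range m, U n) +
            ∑ n ∈ Finset.range m, volume (U n ∩ ⋃ j ∈ Finset.range n, U j) := key
      _ ≤ volume (⋃ i : Fin m, Us i) + ∑ i : Fin m, ENNReal.ofReal ε * volume (Us i) := by
          rw [hbig]; exact add_le_add_right hint _
      _ = volume (⋃ i : Fin m, Us i) + ENNReal.ofReal ε * ∑ i : Fin m, volume (Us i) := by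
          rw [Finset.mul_sum]
  have hμUbi : μU (Finset.univ.biUnion S) = volume (⋃ i : Fin m, Us i) := by
    unfold μU
    congr 1
    rw [Finset.set_biUnion_biUnion]
    simp [hUs]
  have hμeq : ∀ i, μU (S i) = volume (Us i) := fun i => rfl
  have hX : ∑ i : Fin m, μU (S i) = ∑ i : Fin m, volume (Us i) :=
    Finset.sum_congr rfl fun i _ => hμeq i
  rw [hμUbi, hX]
  have hfin : ENNReal.ofReal ε * ∑ i : Fin m, volume (Us i) ≠ ⊤ := by
    refine ENNReal.mul_ne_top ENNReal.ofReal_ne_top ?_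
    exact (ENNReal.sum_lt_top.mpr fun i _ => (hμeq i) ▸ μU_lt_top (S i)).ne
  rw [← ENNReal.add_le_add_iff_right hfin]
  calc ENNReal.ofReal (1 - ε) * ∑ i : Fin m, volume (Us i)
        + ENNReal.ofReal ε * ∑ i : Fin m, volume (Us i)
      = (ENNReal.ofReal (1 - ε) + ENNReal.ofReal ε) * ∑ i : Fin m, volume (Us i) := by
        rw [add_mul]
    _ = ∑ i : Fin m, volume (Us i) := by
        rw [← ENNReal.ofReal_add (by linarith) hε.le]
        norm_num
    _ ≤ _ := hchain

/-- Near-independent knapsack splitting: under the coordinate-separation condition with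
parameter `λ ≥ d/ε`, `VolSel(⋃ P i, k)` is within a `(1-ε)` factor of
`max {∑ VolSel(P i, k i) : ∑ k i ≤ k}`. -/
theorem stmt15 {d m : ℕ} (ε L : ℝ) (hε : 0 < ε) (hε2 : ε ≤ 1 / 2)
    (hL : (d : ℝ) / ε ≤ L) (P : Fin m → Finset (Fin d → ℝ))
    (hpos : ∀ i, ∀ p ∈ P i, ∀ j, 0 < p j)
    (hsep : ∀ i j : Fin m, j < i → ∃ t : Fin d, ∃ δ : ℝ, 0 < δ ∧
      (∀ p ∈ P j, p t ≤ δ) ∧ (∀ p ∈ P i, L * δ ≤ p t)) (k : ℕ) :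
    ENNReal.ofReal (1 - ε) *
        (⨆ (κ : Fin m → ℕ) (_ : ∑ i, κ i ≤ k), ∑ i, VolSel (P i) (κ i))
      ≤ VolSel (Finset.univ.biUnion P) k ∧
    VolSel (Finset.univ.biUnion P) k
      ≤ ⨆ (κ : Fin m → ℕ) (_ : ∑ i, κ i ≤ k), ∑ i, VolSel (P i) (κ i) := by
  classical
  constructor
  · -- lower bound
    rw [ENNReal.mul_iSup]
    refine iSup_le fun κ => ?_
    rw [ENNReal.mul_iSup]
    refine iSup_le fun hκ => ?_
    have hex : ∀ i : Fin m, ∃ T ∈ (P i).powerset.filter (fun s => s.card ≤ κ i),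
        VolSel (P i) (κ i) = μU T := by
      intro i
      exact Finset.exists_mem_eq_sup _
        ⟨∅, Finset.mem_filter.mpr ⟨Finset.empty_mem_powerset _, by simp⟩⟩ μU
    choose T hTmem hTval using hex
    have hTsub : ∀ i, T i ⊆ P i :=
      fun i => Finset.mem_powerset.mp (Finset.mem_filter.mp (hTmem i)).1
    have hTcard : ∀ i, (T i).card ≤ κ i := fun i => (Finset.mem_filter.mp (hTmem i)).2
    have hsep' : ∀ i j : Fin m, j < i → ∃ t : Fin d, ∃ δ : ℝ, 0 < δ ∧
        (∀ p ∈ T j, p t ≤ δ) ∧ (∀ p ∈ T i, L * δ ≤ p t) := by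
      intro i j hji
      obtain ⟨t, δ, h0, ha, hb⟩ := hsep i j hji
      exact ⟨t, δ, h0, fun p hp => ha p (hTsub j hp), fun p hp => hb p (hTsub i hp)⟩
    have main := mainLower ε L hε (by linarith) hL T hsep'
    have hval : ∑ i, VolSel (P i) (κ i) = ∑ i, μU (T i) :=
      Finset.sum_congr rfl fun i _ => hTval i
    rw [hval]
    refine le_trans main ?_
    unfold VolSel
    refine Finset.le_sup (Finset.mem_filter.mpr ⟨Finset.mem_powerset.mpr ?_, ?_⟩)
    · intro x hx
      obtain ⟨i, _, hxi⟩ := Finset.mem_biUnion.mp hx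
      exact Finset.mem_biUnion.mpr ⟨i, Finset.mem_univ _, hTsub i hxi⟩
    · calc (Finset.univ.biUnion T).card ≤ ∑ i, (T i).card := Finset.card_biUnion_le
        _ ≤ ∑ i, κ i := Finset.sum_le_sum fun i _ => hTcard i
        _ ≤ k := hκ
  · -- upper bound
    show (Finset.filter _ _).sup μU ≤ _
    refine Finset.sup_le fun Sf hSf => ?_
    simp only [Finset.mem_filter, Finset.mem_powerset] at hSf
    obtain ⟨hsub, hcard⟩ := hSf
    set Q : Fin m → Finset (Fin d → ℝ) := fun i =>
      (Sf ∩ P i) \ (Finset.univ.filter (· < i)).biUnion (fun j => Sf ∩ P j) with hQ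
    have hQsubS : ∀ i, Q i ⊆ Sf :=
      fun i x hx => (Finset.mem_inter.mp (Finset.mem_sdiff.mp hx).1).1
    have hQsubP : ∀ i, Q i ⊆ P i :=
      fun i x hx => (Finset.mem_inter.mp (Finset.mem_sdiff.mp hx).1).2
    have hQunion : Finset.univ.biUnion Q = Sf := by
      apply Finset.Subset.antisymm
      · exact Finset.biUnion_subset.mpr fun i _ => hQsubS i
      · intro x hx
        have hI : (Finset.univ.filter (fun i : Fin m => x ∈ P i)).Nonempty := by
          obtain ⟨i, _, hxi⟩ := Finset.mem_biUnion.mp (hsub hx)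
          exact ⟨i, Finset.mem_filter.mpr ⟨Finset.mem_univ _, hxi⟩⟩
        set i0 := (Finset.univ.filter (fun i : Fin m => x ∈ P i)).min' hI with hi0
        have hi0mem : x ∈ P i0 := (Finset.mem_filter.mp (Finset.min'_mem _ hI)).2
        refine Finset.mem_biUnion.mpr ⟨i0, Finset.mem_univ _, ?_⟩
        refine Finset.mem_sdiff.mpr ⟨Finset.mem_inter.mpr ⟨hx, hi0mem⟩, ?_⟩
        intro hxbi
        obtain ⟨j, hjmem, hxj⟩ := Finset.mem_biUnion.mp hxbi
        have hji : j < i0 := by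
          have := Finset.mem_filter.mp hjmem
          simpa using this.2
        have hxPj : x ∈ P j := (Finset.mem_inter.mp hxj).2
        have hle : i0 ≤ j := Finset.min'_le (Finset.univ.filter (fun i : Fin m => x ∈ P i)) j
          (Finset.mem_filter.mpr ⟨Finset.mem_univ _, hxPj⟩)
        exact absurd hji (not_lt.mpr hle)
    have hdisj : ∀ i j : Fin m, i ≠ j → Disjoint (Q i) (Q j) := by
      have key : ∀ i j : Fin m, j < i → Disjoint (Q i) (Q j) := by
        intro i j hji
        rw [Finset.disjoint_left]
        intro x hxi hxj
        have h1 : x ∈ Sf ∩ P j := Finset.mem_inter.mpr ⟨hQsubS j hxj, hQsubP j hxj⟩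
        exact (Finset.mem_sdiff.mp hxi).2 (Finset.mem_biUnion.mpr
          ⟨j, Finset.mem_filter.mpr ⟨Finset.mem_univ _, hji⟩, h1⟩)
      intro i j hij
      rcases lt_or_gt_of_ne hij with h | h
      · exact (key j i h).symm
      · exact key i j h
    have hcardsum : ∑ i, (Q i).card = Sf.card := by
      rw [← hQunion]
      exact (Finset.card_biUnion (fun i _ j _ h => hdisj i j h)).symm
    have hμ : μU Sf ≤ ∑ i, μU (Q i) := by
      unfold μU
      have heq : (⋃ p ∈ Sf, Icc (0 : Fin d → ℝ) p)
          = ⋃ i ∈ (Finset.univ : Finset (Fin m)), ⋃ p ∈ Q i, Icc (0 : Fin d → ℝ) p := by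
        rw [← hQunion, Finset.set_biUnion_biUnion]
      rw [heq]
      exact measure_biUnion_finset_le _ _
    refine le_trans hμ (le_trans (Finset.sum_le_sum (fun i _ => ?_))
      (le_iSup₂_of_le (fun i => (Q i).card) (hcardsum ▸ hcard) le_rfl))
    show μU (Q i) ≤ VolSel (P i) ((Q i).card)
    exact Finset.le_sup (Finset.mem_filter.mpr
      ⟨Finset.mem_powerset.mpr (hQsubP i), le_refl _⟩)
end
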